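/- arXiv:2505.06981 — 2 statements merged into one kernel-verified Lean document; each statement's English description precedes it below -/
import Mathlib

section
/- Assume the CSS code and the code-surgery datum. Then for every ψ ∈ F₂^{q}, the spacetime error-wise distance satisfies d(H^{st}_Z, J^{st}_{mz}, ψ) ≥ d(H_Z, α J_Z, ψ). -/
open Matrix

/-- Error-wise distance `d(H, J, ψ) ∈ ℕ∞`: the infimum of the Hamming weight `|e|` over all
row vectors `e` with `H eᵀ = 0` and `J eᵀ = ψᵀ`; `⊤` if no such `e` exists. -/
noncomputable def ewDist {χ κ μ : Type*} [Fintype κ]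
    (H : Matrix χ κ (ZMod 2)) (J : Matrix μ κ (ZMod 2)) (ψ : μ → ZMod 2) : ℕ∞ :=
  sInf {w : ℕ∞ | ∃ e : κ → ZMod 2, H.mulVec e = 0 ∧ J.mulVec e = ψ ∧ w = (hammingNorm e : ℕ∞)}

/-- The pair `(H_G, H_M)` is `(d_R, S)`-bounded. -/
def BoundedPair {n rG rM nG : ℕ} (HG : Matrix (Fin rG) (Fin nG) (ZMod 2))
    (HM : Matrix (Fin rM) (Fin rG) (ZMod 2)) (S : Matrix (Fin nG) (Fin n) (ZMod 2))
    (dR : ℕ) : Prop :=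
  ∀ v : Fin rG → ZMod 2, HM.mulVec v = 0 → hammingNorm v < dR →
    ∃ u : Fin nG → ZMod 2, v = HG.mulVec u ∧
      hammingNorm (Matrix.vecMul u S) ≤ hammingNorm v

/-- Deformed-code X check matrix `H̄_X = [[H_X, T],[0, H_M]]`. -/
def HbarX {n rX rG rM : ℕ} (HX : Matrix (Fin rX) (Fin n) (ZMod 2))
    (T : Matrix (Fin rX) (Fin rG) (ZMod 2)) (HM : Matrix (Fin rM) (Fin rG) (ZMod 2)) :
    Matrix (Fin rX ⊕ Fin rM) (Fin n ⊕ Fin rG) (ZMod 2) :=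
  Matrix.fromBlocks HX T 0 HM

/-- Deformed-code Z check matrix `H̄_Z = [[H_Z, 0],[S, H_Gᵀ]]`. -/
def HbarZ {n rZ rG nG : ℕ} (HZ : Matrix (Fin rZ) (Fin n) (ZMod 2))
    (S : Matrix (Fin nG) (Fin n) (ZMod 2)) (HG : Matrix (Fin rG) (Fin nG) (ZMod 2)) :
    Matrix (Fin rZ ⊕ Fin nG) (Fin n ⊕ Fin rG) (ZMod 2) :=
  Matrix.fromBlocks HZ 0 S HGᵀ

/-- Deformed-code X generator matrix `J̄_X = (α_⊥ J_X  β)`. -/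
def JbarX {n k q rG : ℕ} (JX : Matrix (Fin k) (Fin n) (ZMod 2))
    (αperp : Matrix (Fin (k - q)) (Fin k) (ZMod 2))
    (β : Matrix (Fin (k - q)) (Fin rG) (ZMod 2)) :
    Matrix (Fin (k - q)) (Fin n ⊕ Fin rG) (ZMod 2) :=
  Matrix.fromCols (αperp * JX) β

/-- Deformed-code Z generator matrix `J̄_Z = ((α_⊥ʳ)ᵀ J_Z  0)`. -/
def JbarZ {n k q rG : ℕ} (JZ : Matrix (Fin k) (Fin n) (ZMod 2))
    (αperpR : Matrix (Fin k) (Fin (k - q)) (ZMod 2)) :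
    Matrix (Fin (k - q)) (Fin n ⊕ Fin rG) (ZMod 2) :=
  Matrix.fromCols (αperpRᵀ * JZ) (0 : Matrix (Fin (k - q)) (Fin rG) (ZMod 2))

/-- Repetition-code check matrix `H_m ∈ F₂^{(m−1)×m}`, `(H_m)_{i,j} = 1` iff `j ∈ {i, i+1}`
(1-based); in 0-based indexing: `j = i` or `j = i+1`. -/
def repH (m : ℕ) : Matrix (Fin (m - 1)) (Fin m) (ZMod 2) :=
  Matrix.of fun i j => if (j : ℕ) = (i : ℕ) ∨ (j : ℕ) = (i : ℕ) + 1 then 1 else 0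

/-- The matrix `(E_p  0) ∈ F₂^{p×m}` selecting the first `p` coordinates. -/
def projFirst (p m : ℕ) : Matrix (Fin p) (Fin m) (ZMod 2) :=
  Matrix.of fun i j => if (j : ℕ) = (i : ℕ) then 1 else 0

/-- Hamming weight of a matrix (number of nonzero entries). -/
def matWeight {ι κ : Type*} [Fintype ι] [Fintype κ] (M : Matrix ι κ (ZMod 2)) : ℕ :=
  hammingNorm (Function.uncurry M)

/-- Spacetime X check matrix
`H^{st}_X = [[H̄_X, 0, 0, E_{d_T;1}⊗E], [0, E_{d_T−1}⊗H̄_X, 0, H_{d_T}⊗E], [0, 0, H̄_X, E_{d_T;d_T}⊗E]]`,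
built from the deformed check matrix `H̄_X` (here `E = E_{r_X+r_M}`).  Rounds are 0-based:
round index `s : Fin d_T`, with `s = 0` the first round and `s = d_T − 1` the last. -/
def HstX {n rX rG rM : ℕ} (dT : ℕ)
    (HbX : Matrix (Fin rX ⊕ Fin rM) (Fin n ⊕ Fin rG) (ZMod 2)) :
    Matrix ((Fin rX ⊕ Fin rM) ⊕ (Fin (dT - 1) × (Fin rX ⊕ Fin rM)) ⊕ (Fin rX ⊕ Fin rM))
      ((Fin n ⊕ Fin rG) ⊕ (Fin (dT - 1) × (Fin n ⊕ Fin rG)) ⊕ (Fin n ⊕ Fin rG) ⊕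
        (Fin dT × (Fin rX ⊕ Fin rM))) (ZMod 2) :=
  Matrix.of fun i j =>
    match i, j with
    | Sum.inl c, Sum.inl qq => HbX c qq
    | Sum.inl c, Sum.inr (Sum.inr (Sum.inr (s, c'))) =>
        if (s : ℕ) = 0 ∧ c' = c then 1 else 0
    | Sum.inr (Sum.inl (t, c)), Sum.inr (Sum.inl (t', qq)) =>
        if t' = t then HbX c qq else 0
    | Sum.inr (Sum.inl (t, c)), Sum.inr (Sum.inr (Sum.inr (s, c'))) =>
        if ((s : ℕ) = (t : ℕ) ∨ (s : ℕ) = (t : ℕ) + 1) ∧ c' = c then 1 else 0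
    | Sum.inr (Sum.inr c), Sum.inr (Sum.inr (Sum.inl qq)) => HbX c qq
    | Sum.inr (Sum.inr c), Sum.inr (Sum.inr (Sum.inr (s, c'))) =>
        if (s : ℕ) = dT - 1 ∧ c' = c then 1 else 0
    | _, _ => 0

/-- Spacetime Z check matrix
`H^{st}_Z = [[H_Z, 0, 0, E_{d_T;1}⊗γ₁], [0, E_{d_T−1}⊗H̄_Z, 0, H_{d_T}⊗E], [0, 0, H_Z, E_{d_T;d_T}⊗γ₁]]`,
built from `H_Z` and the deformed check matrix `H̄_Z` (here `E = E_{r_Z+n_G}` and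
`γ₁ = (E_{r_Z}  0)`). -/
def HstZ {n rZ rG nG : ℕ} (dT : ℕ) (HZ : Matrix (Fin rZ) (Fin n) (ZMod 2))
    (HbZ : Matrix (Fin rZ ⊕ Fin nG) (Fin n ⊕ Fin rG) (ZMod 2)) :
    Matrix (Fin rZ ⊕ (Fin (dT - 1) × (Fin rZ ⊕ Fin nG)) ⊕ Fin rZ)
      (Fin n ⊕ (Fin (dT - 1) × (Fin n ⊕ Fin rG)) ⊕ Fin n ⊕
        (Fin dT × (Fin rZ ⊕ Fin nG))) (ZMod 2) :=
  Matrix.of fun i j =>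
    match i, j with
    | Sum.inl z, Sum.inl a => HZ z a
    | Sum.inl z, Sum.inr (Sum.inr (Sum.inr (s, w))) =>
        if (s : ℕ) = 0 ∧ w = Sum.inl z then 1 else 0
    | Sum.inr (Sum.inl (t, w)), Sum.inr (Sum.inl (t', qq)) =>
        if t' = t then HbZ w qq else 0
    | Sum.inr (Sum.inl (t, w)), Sum.inr (Sum.inr (Sum.inr (s, w'))) =>
        if ((s : ℕ) = (t : ℕ) ∨ (s : ℕ) = (t : ℕ) + 1) ∧ w' = w then 1 else 0
    | Sum.inr (Sum.inr z), Sum.inr (Sum.inr (Sum.inl a)) => HZ z a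
    | Sum.inr (Sum.inr z), Sum.inr (Sum.inr (Sum.inr (s, w))) =>
        if (s : ℕ) = dT - 1 ∧ w = Sum.inl z then 1 else 0
    | _, _ => 0

/-- Spacetime X generator matrix `J^{st}_X = (J̄_X, 1_{d_T−1}⊗J̄_X, J̄_X, 0)`. -/
def JstX {n k q rX rG rM : ℕ} (dT : ℕ)
    (JbX : Matrix (Fin (k - q)) (Fin n ⊕ Fin rG) (ZMod 2)) :
    Matrix (Fin (k - q))
      ((Fin n ⊕ Fin rG) ⊕ (Fin (dT - 1) × (Fin n ⊕ Fin rG)) ⊕ (Fin n ⊕ Fin rG) ⊕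
        (Fin dT × (Fin rX ⊕ Fin rM))) (ZMod 2) :=
  Matrix.of fun i j =>
    match j with
    | Sum.inl qq => JbX i qq
    | Sum.inr (Sum.inl (_, qq)) => JbX i qq
    | Sum.inr (Sum.inr (Sum.inl qq)) => JbX i qq
    | Sum.inr (Sum.inr (Sum.inr _)) => 0

/-- Spacetime Z generator matrix `J^{st}_Z = ((α_⊥ʳ)ᵀJ_Z, 1_{d_T−1}⊗J̄_Z, (α_⊥ʳ)ᵀJ_Z, 0)`,
given `JZ' = (α_⊥ʳ)ᵀ J_Z` and `J̄_Z`. -/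
def JstZ {n k q rZ rG nG : ℕ} (dT : ℕ)
    (JZ' : Matrix (Fin (k - q)) (Fin n) (ZMod 2))
    (JbZ : Matrix (Fin (k - q)) (Fin n ⊕ Fin rG) (ZMod 2)) :
    Matrix (Fin (k - q))
      (Fin n ⊕ (Fin (dT - 1) × (Fin n ⊕ Fin rG)) ⊕ Fin n ⊕
        (Fin dT × (Fin rZ ⊕ Fin nG))) (ZMod 2) :=
  Matrix.of fun i j =>
    match j with
    | Sum.inl a => JZ' i a
    | Sum.inr (Sum.inl (_, qq)) => JbZ i qq
    | Sum.inr (Sum.inr (Sum.inl a)) => JZ' i a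
    | Sum.inr (Sum.inr (Sum.inr _)) => 0

/-- Spacetime generator matrix for measured Z logical operators
`J^{st}_{mz} = (αJ_Z, 1_{d_T−1}⊗(αJ_Z η), αJ_Z, 0)`, given `M = α J_Z`
(note `α J_Z η = (α J_Z  0)`). -/
def JstMZ {n q rZ rG nG : ℕ} (dT : ℕ) (M : Matrix (Fin q) (Fin n) (ZMod 2)) :
    Matrix (Fin q)
      (Fin n ⊕ (Fin (dT - 1) × (Fin n ⊕ Fin rG)) ⊕ Fin n ⊕
        (Fin dT × (Fin rZ ⊕ Fin nG))) (ZMod 2) :=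
  Matrix.of fun i j =>
    match j with
    | Sum.inl a => M i a
    | Sum.inr (Sum.inl (_, Sum.inl a)) => M i a
    | Sum.inr (Sum.inl (_, Sum.inr _)) => 0
    | Sum.inr (Sum.inr (Sum.inl a)) => M i a
    | Sum.inr (Sum.inr (Sum.inr _)) => 0

/-- Spacetime generator matrix for measurement outcomes
`J^{st}_{oc} = (αJ_Z, 0, 0, E_{d_T;1}⊗(αJ_Z R γ₂))`, given `M = α J_Z` and `N = α J_Z R`
(note `α J_Z R γ₂ = (0  α J_Z R)`). -/
def JstOC {n q rZ rG nG : ℕ} (dT : ℕ) (M : Matrix (Fin q) (Fin n) (ZMod 2))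
    (N : Matrix (Fin q) (Fin nG) (ZMod 2)) :
    Matrix (Fin q)
      (Fin n ⊕ (Fin (dT - 1) × (Fin n ⊕ Fin rG)) ⊕ Fin n ⊕
        (Fin dT × (Fin rZ ⊕ Fin nG))) (ZMod 2) :=
  Matrix.of fun i j =>
    match j with
    | Sum.inl a => M i a
    | Sum.inr (Sum.inl _) => 0
    | Sum.inr (Sum.inr (Sum.inl _)) => 0
    | Sum.inr (Sum.inr (Sum.inr (_, Sum.inl _))) => 0
    | Sum.inr (Sum.inr (Sum.inr (s, Sum.inr g))) => if (s : ℕ) = 0 then N i g else 0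

section helpers
open Finset
lemma zmod2_add_self' (x : ZMod 2) : x + x = 0 := CharTwo.add_self_eq_zero x

lemma telescope2' (g : ℕ → ZMod 2) (m : ℕ) :
    ∑ i ∈ Finset.range m, (g i + g (i + 1)) = g 0 + g m := by
  induction m with
  | zero => simp [zmod2_add_self']
  | succ m ih =>
      rw [Finset.sum_range_succ, ih]
      linear_combination zmod2_add_self' (g m)

lemma hn_eq_sum' {ι : Type*} [Fintype ι] [DecidableEq ι] (x : ι → ZMod 2) :
    (hammingNorm x : ℕ) = ∑ i, if x i ≠ 0 then 1 else 0 := by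
  simp [hammingNorm, Finset.card_filter]

lemma ite_or_add' {p q : Prop} [Decidable p] [Decidable q] (h : ¬(p ∧ q)) (x : ZMod 2) :
    (if p ∨ q then x else 0) = (if p then x else 0) + (if q then x else 0) := by
  by_cases hp : p <;> by_cases hq : q <;> simp [hp, hq] <;> tauto
end helpers

section main
variable {n rZ rG nG : ℕ} {dT : ℕ} {HZ : Matrix (Fin rZ) (Fin n) (ZMod 2)}
  {S : Matrix (Fin nG) (Fin n) (ZMod 2)} {HG : Matrix (Fin rG) (Fin nG) (ZMod 2)}
  {e : (Fin n ⊕ (Fin (dT - 1) × (Fin n ⊕ Fin rG)) ⊕ Fin n ⊕ (Fin dT × (Fin rZ ⊕ Fin nG))) → ZMod 2}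

lemma claimA (hdT : 2 ≤ dT) (he : (HstZ dT HZ (HbarZ HZ S HG)).mulVec e = 0) (z : Fin rZ) :
    HZ.mulVec (fun a => e (Sum.inl a)) z
      = e (Sum.inr (Sum.inr (Sum.inr (⟨0, by omega⟩, Sum.inl z)))) := by
  have h := congrFun he (Sum.inl z)
  simp only [Matrix.mulVec, dotProduct, HstZ, Matrix.of_apply, Fintype.sum_sum_type,
    Fintype.sum_prod_type, Pi.zero_apply] at h
  simp only [zero_mul, Finset.sum_const_zero, add_zero, zero_add, Sum.inl.injEq,
    reduceCtorEq, and_false, if_false, ite_mul, one_mul] at h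
  have hc : ∀ x : Fin dT, ((x:ℕ) = 0) = (x = (⟨0, by omega⟩ : Fin dT)) := fun x => by
    simp [Fin.ext_iff]
  simp only [and_comm, ite_and, Finset.sum_ite_eq', Finset.mem_univ, if_true, hc] at h
  rw [Matrix.mulVec]
  simp only [dotProduct]
  have h2 := eq_neg_of_add_eq_zero_left h
  rwa [CharTwo.neg_eq] at h2

lemma claimC (hdT : 2 ≤ dT) (he : (HstZ dT HZ (HbarZ HZ S HG)).mulVec e = 0) (z : Fin rZ) :
    HZ.mulVec (fun a => e (Sum.inr (Sum.inr (Sum.inl a)))) z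
      = e (Sum.inr (Sum.inr (Sum.inr (⟨dT - 1, by omega⟩, Sum.inl z)))) := by
  have h := congrFun he (Sum.inr (Sum.inr z))
  simp only [Matrix.mulVec, dotProduct, HstZ, Matrix.of_apply, Fintype.sum_sum_type,
    Fintype.sum_prod_type, Pi.zero_apply] at h
  simp only [zero_mul, Finset.sum_const_zero, add_zero, zero_add, Sum.inl.injEq,
    reduceCtorEq, and_false, if_false, ite_mul, one_mul] at h
  have hc : ∀ x : Fin dT, ((x:ℕ) = dT - 1) = (x = (⟨dT - 1, by omega⟩ : Fin dT)) := fun x => by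
    simp [Fin.ext_iff]
  simp only [and_comm, ite_and, Finset.sum_ite_eq', Finset.mem_univ, if_true, hc] at h
  rw [Matrix.mulVec]
  simp only [dotProduct]
  have h2 := eq_neg_of_add_eq_zero_left h
  rwa [CharTwo.neg_eq] at h2

lemma claimB (hdT : 2 ≤ dT) (he : (HstZ dT HZ (HbarZ HZ S HG)).mulVec e = 0)
    (t : Fin (dT - 1)) (z : Fin rZ) :
    HZ.mulVec (fun a => e (Sum.inr (Sum.inl (t, Sum.inl a)))) z
      = e (Sum.inr (Sum.inr (Sum.inr (⟨(t : ℕ), by omega⟩, Sum.inl z))))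
        + e (Sum.inr (Sum.inr (Sum.inr (⟨(t : ℕ) + 1, by omega⟩, Sum.inl z)))) := by
  have h := congrFun he (Sum.inr (Sum.inl (t, Sum.inl z)))
  simp only [Matrix.mulVec, dotProduct, HstZ, HbarZ, Matrix.of_apply, Fintype.sum_sum_type,
    Fintype.sum_prod_type, Pi.zero_apply, Matrix.fromBlocks_apply₁₁, Matrix.fromBlocks_apply₁₂] at h
  simp only [zero_mul, Finset.sum_const_zero, add_zero, zero_add, Sum.inl.injEq,
    reduceCtorEq, and_false, if_false, ite_mul, one_mul, mul_zero, ite_self,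
    Matrix.zero_apply] at h
  rw [Finset.sum_comm] at h
  have hc1 : ∀ x : Fin dT, ((x:ℕ) = (t:ℕ)) = (x = (⟨(t:ℕ), by omega⟩ : Fin dT)) := fun x => by
    simp [Fin.ext_iff]
  have hc2 : ∀ x : Fin dT, ((x:ℕ) = (t:ℕ) + 1) = (x = (⟨(t:ℕ) + 1, by omega⟩ : Fin dT)) :=
    fun x => by simp [Fin.ext_iff]
  have hdisj : ∀ x : Fin dT,
      ¬(x = (⟨(t:ℕ), by omega⟩ : Fin dT) ∧ x = (⟨(t:ℕ) + 1, by omega⟩ : Fin dT)) := by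
    rintro x ⟨h1, h2⟩
    rw [h1] at h2
    simp [Fin.ext_iff] at h2
  simp only [and_comm, ite_and, Finset.sum_ite_eq', Finset.mem_univ, if_true, hc1, hc2] at h
  simp only [fun x : Fin dT => ite_or_add' (hdisj x)
      (e (Sum.inr (Sum.inr (Sum.inr (x, Sum.inl z))))),
    Finset.sum_add_distrib, Finset.sum_ite_eq', Finset.mem_univ, if_true] at h
  rw [Matrix.mulVec]
  simp only [dotProduct]
  have h2 := eq_neg_of_add_eq_zero_left h
  simp only [neg_add, CharTwo.neg_eq] at h2
  exact h2

lemma claimHZ (hdT : 2 ≤ dT) (he : (HstZ dT HZ (HbarZ HZ S HG)).mulVec e = 0) :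
    HZ.mulVec (fun a => e (Sum.inl a) + (∑ t, e (Sum.inr (Sum.inl (t, Sum.inl a))))
      + e (Sum.inr (Sum.inr (Sum.inl a)))) = 0 := by
  funext z
  set g : ℕ → ZMod 2 := fun i =>
    if h : i < dT then e (Sum.inr (Sum.inr (Sum.inr (⟨i, h⟩, Sum.inl z)))) else 0 with hg
  have key : ∀ (i : ℕ) (h : i < dT), e (Sum.inr (Sum.inr (Sum.inr (⟨i, h⟩, Sum.inl z)))) = g i :=
    fun i h => by rw [hg]; simp only [h, dif_pos]
  have hA := claimA hdT he z
  have hC := claimC hdT he z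
  rw [key] at hA hC
  have expand : (HZ.mulVec (fun a => e (Sum.inl a) + (∑ t, e (Sum.inr (Sum.inl (t, Sum.inl a))))
      + e (Sum.inr (Sum.inr (Sum.inl a))))) z
      = HZ.mulVec (fun a => e (Sum.inl a)) z
        + (∑ t, HZ.mulVec (fun a => e (Sum.inr (Sum.inl (t, Sum.inl a)))) z)
        + HZ.mulVec (fun a => e (Sum.inr (Sum.inr (Sum.inl a)))) z := by
    simp only [Matrix.mulVec, dotProduct, mul_add, Finset.mul_sum, Finset.sum_add_distrib]
    rw [Finset.sum_comm]
  rw [Pi.zero_apply, expand, hA, hC]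
  have hB : ∀ t : Fin (dT - 1),
      HZ.mulVec (fun a => e (Sum.inr (Sum.inl (t, Sum.inl a)))) z = g (t : ℕ) + g ((t : ℕ) + 1) := by
    intro t
    rw [claimB hdT he t z, key, key]
  rw [Finset.sum_congr rfl fun t _ => hB t]
  have : ∑ t : Fin (dT - 1), (g (t : ℕ) + g ((t : ℕ) + 1))
      = ∑ i ∈ Finset.range (dT - 1), (g i + g (i + 1)) :=
    Fin.sum_univ_eq_sum_range (fun i => g i + g (i + 1)) (dT - 1)
  rw [this, telescope2']
  linear_combination zmod2_add_self' (g 0) + zmod2_add_self' (g (dT - 1))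

lemma claimJ {qq : ℕ} {M : Matrix (Fin qq) (Fin n) (ZMod 2)} {ψ : Fin qq → ZMod 2}
    (hj : (JstMZ dT M).mulVec e = ψ) :
    M.mulVec (fun a => e (Sum.inl a) + (∑ t, e (Sum.inr (Sum.inl (t, Sum.inl a))))
      + e (Sum.inr (Sum.inr (Sum.inl a)))) = ψ := by
  funext i
  have h := congrFun hj i
  simp only [Matrix.mulVec, dotProduct, JstMZ, Matrix.of_apply, Fintype.sum_sum_type,
    Fintype.sum_prod_type, mul_zero, zero_mul, Finset.sum_const_zero, add_zero, zero_add] at h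
  simp only [Matrix.mulVec, dotProduct, mul_add, Finset.mul_sum, Finset.sum_add_distrib]
  rw [Finset.sum_comm (f := fun (x : Fin n) (t : Fin (dT - 1)) =>
    M i x * e (Sum.inr (Sum.inl (t, Sum.inl x))))]
  linear_combination h

lemma claimW :
    hammingNorm (fun a => e (Sum.inl a) + (∑ t, e (Sum.inr (Sum.inl (t, Sum.inl a))))
      + e (Sum.inr (Sum.inr (Sum.inl a)))) ≤ hammingNorm e := by
  set e' := fun a => e (Sum.inl a) + (∑ t, e (Sum.inr (Sum.inl (t, Sum.inl a))))
      + e (Sum.inr (Sum.inr (Sum.inl a))) with he'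
  have step1 : hammingNorm e' ≤ ∑ a : Fin n, ((if e (Sum.inl a) ≠ 0 then 1 else 0)
      + (∑ t : Fin (dT - 1), if e (Sum.inr (Sum.inl (t, Sum.inl a))) ≠ 0 then 1 else 0)
      + (if e (Sum.inr (Sum.inr (Sum.inl a))) ≠ 0 then 1 else 0)) := by
    rw [hn_eq_sum']
    refine Finset.sum_le_sum fun a _ => ?_
    by_cases h : e' a = 0
    · simp [h]
    · rw [if_pos h]
      by_cases u1 : e (Sum.inl a) = 0
      · by_cases u3 : e (Sum.inr (Sum.inr (Sum.inl a))) = 0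
        · have hex : ∃ t, e (Sum.inr (Sum.inl (t, Sum.inl a))) ≠ 0 := by
            by_contra hc
            push_neg at hc
            exact h (by simp [he', u1, u3, Finset.sum_eq_zero fun t _ => hc t])
          obtain ⟨t, ht⟩ := hex
          have h1 : 1 ≤ ∑ t : Fin (dT - 1),
              if e (Sum.inr (Sum.inl (t, Sum.inl a))) ≠ 0 then 1 else 0 := by
            have := Finset.single_le_sum
              (f := fun t : Fin (dT - 1) =>
                if e (Sum.inr (Sum.inl (t, Sum.inl a))) ≠ 0 then 1 else 0)
              (fun i _ => Nat.zero_le _) (Finset.mem_univ t)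
            simpa [ht] using this
          omega
        · simp only [u3, ne_eq, not_false_iff, if_true]
          omega
      · simp only [u1, ne_eq, not_false_iff, if_true]
        omega
  have step2 : (∑ a : Fin n, ((if e (Sum.inl a) ≠ 0 then 1 else 0)
      + (∑ t : Fin (dT - 1), if e (Sum.inr (Sum.inl (t, Sum.inl a))) ≠ 0 then 1 else 0)
      + (if e (Sum.inr (Sum.inr (Sum.inl a))) ≠ 0 then 1 else 0))) ≤ hammingNorm e := by
    rw [hn_eq_sum' e]
    rw [Fintype.sum_sum_type]
    rw [Fintype.sum_sum_type]
    rw [Fintype.sum_sum_type]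
    simp only [Finset.sum_add_distrib]
    rw [Finset.sum_comm (f := fun a (t : Fin (dT - 1)) =>
      if e (Sum.inr (Sum.inl (t, Sum.inl a))) ≠ 0 then 1 else 0)]
    simp only [Fintype.sum_prod_type, Fintype.sum_sum_type]
    have h2 : (∑ t : Fin (dT - 1), ∑ a : Fin n,
        if e (Sum.inr (Sum.inl (t, Sum.inl a))) ≠ 0 then 1 else 0)
        ≤ ∑ t : Fin (dT - 1), ((∑ a : Fin n,
            if e (Sum.inr (Sum.inl (t, Sum.inl a))) ≠ 0 then 1 else 0)
          + ∑ gg : Fin rG, if e (Sum.inr (Sum.inl (t, Sum.inr gg))) ≠ 0 then 1 else 0) :=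
      Finset.sum_le_sum fun t _ => Nat.le_add_right _ _
    omega
  exact le_trans step1 step2
end main

/-- spacetime error-wise distance bound for errors on measured Z logical
operators: `d(H^{st}_Z, J^{st}_{mz}, ψ) ≥ d(H_Z, α J_Z, ψ)`. -/
theorem spacetime_mz_ewDist_lower_bound
    {n k q rX rZ rG rM nG : ℕ}
    (HX : Matrix (Fin rX) (Fin n) (ZMod 2)) (HZ : Matrix (Fin rZ) (Fin n) (ZMod 2))
    (JX JZ : Matrix (Fin k) (Fin n) (ZMod 2))
    (hHXHZ : HX * HZᵀ = 0) (hHXJZ : HX * JZᵀ = 0) (hHZJX : HZ * JXᵀ = 0)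
    (hJXJZ : JX * JZᵀ = 1)
    (hq1 : 1 ≤ q) (hqk : q ≤ k)
    (α : Matrix (Fin q) (Fin k) (ZMod 2))
    (αperp : Matrix (Fin (k - q)) (Fin k) (ZMod 2)) (hperp : αperp * αᵀ = 0)
    (αperpR : Matrix (Fin k) (Fin (k - q)) (ZMod 2)) (hrinv : αperp * αperpR = 1)
    (S : Matrix (Fin nG) (Fin n) (ZMod 2)) (T : Matrix (Fin rX) (Fin rG) (ZMod 2))
    (HG : Matrix (Fin rG) (Fin nG) (ZMod 2)) (HM : Matrix (Fin rM) (Fin rG) (ZMod 2))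
    (R : Matrix (Fin n) (Fin nG) (ZMod 2)) (β : Matrix (Fin (k - q)) (Fin rG) (ZMod 2))
    (hs1 : HX * Sᵀ = T * HG) (hs2 : HM * HG = 0)
    (hs3a : α * JZ * R * S = α * JZ) (hs3b : HG * (α * JZ * R)ᵀ = 0)
    (hs4 : αperp * JX * Sᵀ = β * HG)
    (dT : ℕ) (hdT : 2 ≤ dT) :
    ∀ ψ : Fin q → ZMod 2,
      ewDist HZ (α * JZ) ψ ≤
        ewDist (HstZ dT HZ (HbarZ HZ S HG)) (JstMZ dT (α * JZ)) ψ := by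
  intro ψ
  unfold ewDist
  refine le_sInf ?_
  rintro w ⟨e, he, hj, rfl⟩
  have hmem : ((hammingNorm (fun a => e (Sum.inl a)
        + (∑ t, e (Sum.inr (Sum.inl (t, Sum.inl a))))
        + e (Sum.inr (Sum.inr (Sum.inl a))))) : ℕ∞)
      ∈ {w : ℕ∞ | ∃ e0 : Fin n → ZMod 2, HZ.mulVec e0 = 0 ∧ (α * JZ).mulVec e0 = ψ ∧
          w = (hammingNorm e0 : ℕ∞)} :=
    ⟨_, claimHZ hdT he, claimJ hj, rfl⟩
  exact le_trans (sInf_le hmem) (by exact_mod_cast claimW)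
end

section
/- Assume the CSS code and the code-surgery datum. Then for every ψ ∈ F₂^{q}, the spacetime error-wise distance satisfies d(H^{st}_Z, J^{st}_{oc}, ψ) ≥ min{ d(H_Z, α J_Z, ψ), d_T }, where the minimum is taken in ℕ∞. -/
open Matrix

section Helpers

open Finset

private lemma sum_fin_ite_eq' {dT : ℕ} (c : ℕ) (hc : c < dT) (g : Fin dT → ZMod 2) :
    (∑ s : Fin dT, if (s : ℕ) = c then g s else 0) = g ⟨c, hc⟩ := by
  rw [Finset.sum_eq_single ⟨c, hc⟩]
  · simp
  · intro b _ hb; rw [if_neg]; simpa [Fin.ext_iff] using hb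
  · simp

private lemma sum_fin_ite_or' {dT t : ℕ} (h1 : t < dT) (h2 : t + 1 < dT) (g : Fin dT → ZMod 2) :
    (∑ s : Fin dT, if (s : ℕ) = t ∨ (s : ℕ) = t + 1 then g s else 0)
      = g ⟨t, h1⟩ + g ⟨t + 1, h2⟩ := by
  have key : ∀ s : Fin dT, (if (s : ℕ) = t ∨ (s : ℕ) = t + 1 then g s else 0)
      = (if (s : ℕ) = t then g s else 0) + (if (s : ℕ) = t + 1 then g s else 0) := by
    intro s
    by_cases A : (s : ℕ) = t <;> by_cases B : (s : ℕ) = t + 1 <;> simp_all <;> omega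
  rw [Finset.sum_congr rfl fun s _ => key s, Finset.sum_add_distrib,
    sum_fin_ite_eq' t h1, sum_fin_ite_eq' (t + 1) h2]

private lemma sum_ite_and_eq' {ι : Type*} [Fintype ι] [DecidableEq ι] (P : Prop) [Decidable P]
    (z : ι) (g : ι → ZMod 2) :
    (∑ a : ι, if P ∧ a = z then g a else 0) = if P then g z else 0 := by
  by_cases hP : P <;> simp [hP]

private lemma sum_ite_pull' {ι : Type*} [Fintype ι] (P : Prop) [Decidable P] (g : ι → ZMod 2) :
    (∑ a : ι, if P then g a else 0) = if P then (∑ a : ι, g a) else 0 := by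
  by_cases hP : P <;> simp [hP]

private lemma hn_add_le {ι : Type*} [Fintype ι] (x y : ι → ZMod 2) :
    hammingNorm (x + y) ≤ hammingNorm x + hammingNorm y := by
  classical
  unfold hammingNorm
  refine le_trans (Finset.card_le_card ?_) (Finset.card_union_le _ _)
  intro i hi
  simp only [mem_filter, mem_univ, true_and, mem_union] at *
  by_contra h
  push_neg at h
  simp [Pi.add_apply, h.1, h.2] at hi

private lemma hn_sum_le {ι γ : Type*} [Fintype ι] [DecidableEq γ] (s : Finset γ)
    (g : γ → ι → ZMod 2) :
    hammingNorm (∑ t ∈ s, g t) ≤ ∑ t ∈ s, hammingNorm (g t) := by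
  classical
  induction s using Finset.induction with
  | empty => simp [hammingNorm]
  | insert a s hx ih =>
      rw [Finset.sum_insert hx, Finset.sum_insert hx]
      exact le_trans (hn_add_le _ _) (by omega)

private lemma hn_sum_type {a b : Type*} [Fintype a] [Fintype b] (e : a ⊕ b → ZMod 2) :
    hammingNorm e = hammingNorm (e ∘ Sum.inl) + hammingNorm (e ∘ Sum.inr) := by
  simp only [hammingNorm, Finset.card_filter, Fintype.sum_sum_type, Function.comp]

private lemma hn_prod {a c : Type*} [Fintype a] [Fintype c] (g : a × c → ZMod 2) :
    hammingNorm g = ∑ t : a, hammingNorm (fun w => g (t, w)) := by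
  simp only [hammingNorm, Finset.card_filter, Fintype.sum_prod_type]

private lemma hn_mono {ι : Type*} [Fintype ι] (x y : ι → ZMod 2)
    (h : ∀ i, x i ≠ 0 → y i ≠ 0) : hammingNorm x ≤ hammingNorm y := by
  unfold hammingNorm
  apply Finset.card_le_card
  intro i hi
  simp only [Finset.mem_filter, Finset.mem_univ, true_and] at *
  exact h i hi

private lemma zmod2_cancel : ∀ a b : ZMod 2, a + b = 0 → a = b := by decide

end Helpers

/-- spacetime error-wise distance bound for errors on extracted eigenvalues:
`d(H^{st}_Z, J^{st}_{oc}, ψ) ≥ min{ d(H_Z, α J_Z, ψ), d_T }`. -/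
theorem spacetime_oc_ewDist_lower_bound
    {n k q rX rZ rG rM nG : ℕ}
    (HX : Matrix (Fin rX) (Fin n) (ZMod 2)) (HZ : Matrix (Fin rZ) (Fin n) (ZMod 2))
    (JX JZ : Matrix (Fin k) (Fin n) (ZMod 2))
    (hHXHZ : HX * HZᵀ = 0) (hHXJZ : HX * JZᵀ = 0) (hHZJX : HZ * JXᵀ = 0)
    (hJXJZ : JX * JZᵀ = 1)
    (hq1 : 1 ≤ q) (hqk : q ≤ k)
    (α : Matrix (Fin q) (Fin k) (ZMod 2))
    (αperp : Matrix (Fin (k - q)) (Fin k) (ZMod 2)) (hperp : αperp * αᵀ = 0)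
    (αperpR : Matrix (Fin k) (Fin (k - q)) (ZMod 2)) (hrinv : αperp * αperpR = 1)
    (S : Matrix (Fin nG) (Fin n) (ZMod 2)) (T : Matrix (Fin rX) (Fin rG) (ZMod 2))
    (HG : Matrix (Fin rG) (Fin nG) (ZMod 2)) (HM : Matrix (Fin rM) (Fin rG) (ZMod 2))
    (R : Matrix (Fin n) (Fin nG) (ZMod 2)) (β : Matrix (Fin (k - q)) (Fin rG) (ZMod 2))
    (hs1 : HX * Sᵀ = T * HG) (hs2 : HM * HG = 0)
    (hs3a : α * JZ * R * S = α * JZ) (hs3b : HG * (α * JZ * R)ᵀ = 0)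
    (hs4 : αperp * JX * Sᵀ = β * HG)
    (dT : ℕ) (hdT : 2 ≤ dT) :
    ∀ ψ : Fin q → ZMod 2,
      min (ewDist HZ (α * JZ) ψ) (dT : ℕ∞) ≤
        ewDist (HstZ dT HZ (HbarZ HZ S HG)) (JstOC dT (α * JZ) (α * JZ * R)) ψ := by
  intro ψ
  apply le_sInf
  rintro w ⟨e, hH, hJ, rfl⟩
  classical
  set e0 : Fin n → ZMod 2 := fun a => e (Sum.inl a) with he0
  set f : Fin (dT - 1) → (Fin n ⊕ Fin rG) → ZMod 2 :=
    fun t qq => e (Sum.inr (Sum.inl (t, qq))) with hf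
  set mm : Fin dT → (Fin rZ ⊕ Fin nG) → ZMod 2 :=
    fun s w => e (Sum.inr (Sum.inr (Sum.inr (s, w)))) with hmm
  have hdT0 : 0 < dT := by omega
  by_cases hex : ∃ s : Fin dT, mm s = 0
  · -- there is a measurement-error-free round; build a static error
    obtain ⟨ts, hts⟩ := hex
    -- extract the row equations
    have h1 : ∀ z, HZ.mulVec e0 z + mm ⟨0, hdT0⟩ (Sum.inl z) = 0 := by
      intro z
      have h := congrFun hH (Sum.inl z)
      simp only [Matrix.mulVec, dotProduct, HstZ, Matrix.of_apply, Fintype.sum_sum_type,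
        Fintype.sum_prod_type, ite_mul, zero_mul, one_mul, Finset.sum_const_zero, add_zero,
        zero_add, Sum.inl.injEq, reduceCtorEq, and_false, if_false,
        sum_ite_and_eq', Pi.zero_apply] at h
      rw [sum_fin_ite_eq' 0 hdT0] at h
      exact h
    have h2L : ∀ (t : Fin (dT - 1)) (z : Fin rZ),
        HZ.mulVec (fun i => f t (Sum.inl i)) z
          + (mm ⟨(t : ℕ), by omega⟩ (Sum.inl z)
            + mm ⟨(t : ℕ) + 1, by omega⟩ (Sum.inl z)) = 0 := by
      intro t z
      have h := congrFun hH (Sum.inr (Sum.inl (t, Sum.inl z)))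
      simp only [Matrix.mulVec, dotProduct, HstZ, HbarZ, Matrix.of_apply, Fintype.sum_sum_type,
        Fintype.sum_prod_type, Matrix.fromBlocks_apply₁₁, Matrix.fromBlocks_apply₁₂,
        Matrix.fromBlocks_apply₂₁, Matrix.fromBlocks_apply₂₂,
        ite_mul, zero_mul, one_mul, Finset.sum_const_zero, add_zero, zero_add,
        Sum.inl.injEq, Sum.inr.injEq, reduceCtorEq, and_false, false_and, if_false,
        sum_ite_and_eq', sum_ite_pull', Finset.sum_ite_eq', Finset.mem_univ, if_true,
        Pi.zero_apply, Matrix.zero_apply] at h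
      rw [sum_fin_ite_or' (by omega) (by omega)] at h
      exact h
    have h2R : ∀ (t : Fin (dT - 1)) (g : Fin nG),
        S.mulVec (fun i => f t (Sum.inl i)) g + HGᵀ.mulVec (fun j => f t (Sum.inr j)) g
          + (mm ⟨(t : ℕ), by omega⟩ (Sum.inr g)
            + mm ⟨(t : ℕ) + 1, by omega⟩ (Sum.inr g)) = 0 := by
      intro t g
      have h := congrFun hH (Sum.inr (Sum.inl (t, Sum.inr g)))
      simp only [Matrix.mulVec, dotProduct, HstZ, HbarZ, Matrix.of_apply, Fintype.sum_sum_type,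
        Fintype.sum_prod_type, Matrix.fromBlocks_apply₁₁, Matrix.fromBlocks_apply₁₂,
        Matrix.fromBlocks_apply₂₁, Matrix.fromBlocks_apply₂₂,
        ite_mul, zero_mul, one_mul, Finset.sum_const_zero, add_zero, zero_add,
        Sum.inl.injEq, Sum.inr.injEq, reduceCtorEq, and_false, false_and, if_false,
        sum_ite_and_eq', sum_ite_pull', Finset.sum_ite_eq', Finset.mem_univ, if_true,
        Pi.zero_apply, Matrix.zero_apply] at h
      rw [sum_fin_ite_or' (by omega) (by omega)] at h
      exact h
    have hJ' : ∀ i, (α * JZ).mulVec e0 i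
        + (α * JZ * R).mulVec (fun g => mm ⟨0, hdT0⟩ (Sum.inr g)) i = ψ i := by
      intro i
      have h := congrFun hJ i
      simp only [Matrix.mulVec, dotProduct, JstOC, Matrix.of_apply, Fintype.sum_sum_type,
        Fintype.sum_prod_type, ite_mul, zero_mul, one_mul, Finset.sum_const_zero, add_zero,
        zero_add, sum_ite_pull'] at h
      rw [sum_fin_ite_eq' 0 hdT0] at h
      exact h
    -- telescoping accumulated errors
    set AA : ℕ → Fin n → ZMod 2 := fun u i => e0 i +
      ∑ t' ∈ Finset.univ.filter (fun t' : Fin (dT - 1) => (t' : ℕ) < u), f t' (Sum.inl i)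
      with hAA
    set BB : ℕ → Fin rG → ZMod 2 := fun u j =>
      ∑ t' ∈ Finset.univ.filter (fun t' : Fin (dT - 1) => (t' : ℕ) < u), f t' (Sum.inr j)
      with hBB
    have hnotmem : ∀ (u : ℕ) (hu : u < dT - 1), (⟨u, hu⟩ : Fin (dT - 1)) ∉
        Finset.univ.filter (fun t' : Fin (dT - 1) => (t' : ℕ) < u) := by
      intro u hu
      simp
    have hins : ∀ (u : ℕ) (hu : u < dT - 1),
        (Finset.univ.filter (fun t' : Fin (dT - 1) => (t' : ℕ) < u + 1))
          = insert (⟨u, hu⟩ : Fin (dT - 1))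
              (Finset.univ.filter (fun t' : Fin (dT - 1) => (t' : ℕ) < u)) := by
      intro u hu
      ext t'
      obtain ⟨tv, htv⟩ := t'
      simp only [Finset.mem_filter, Finset.mem_univ, true_and, Finset.mem_insert,
        Fin.mk.injEq]
      omega
    have hstepA : ∀ u : ℕ, ∀ hu : u < dT - 1,
        AA (u + 1) = AA u + (fun i => f ⟨u, hu⟩ (Sum.inl i)) := by
      intro u hu
      funext i
      show e0 i + ∑ t' ∈ Finset.univ.filter (fun t' : Fin (dT - 1) => (t' : ℕ) < u + 1),
            f t' (Sum.inl i)
          = (e0 i + ∑ t' ∈ Finset.univ.filter (fun t' : Fin (dT - 1) => (t' : ℕ) < u),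
            f t' (Sum.inl i)) + f ⟨u, hu⟩ (Sum.inl i)
      rw [hins u hu, Finset.sum_insert (hnotmem u hu)]
      ring
    have hstepB : ∀ u : ℕ, ∀ hu : u < dT - 1,
        BB (u + 1) = BB u + (fun j => f ⟨u, hu⟩ (Sum.inr j)) := by
      intro u hu
      funext j
      show (∑ t' ∈ Finset.univ.filter (fun t' : Fin (dT - 1) => (t' : ℕ) < u + 1),
            f t' (Sum.inr j))
          = (∑ t' ∈ Finset.univ.filter (fun t' : Fin (dT - 1) => (t' : ℕ) < u),
            f t' (Sum.inr j)) + f ⟨u, hu⟩ (Sum.inr j)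
      rw [hins u hu, Finset.sum_insert (hnotmem u hu)]
      ring
    have key : ∀ u : ℕ, ∀ hu : u < dT,
        (∀ z, HZ.mulVec (AA u) z = mm ⟨u, hu⟩ (Sum.inl z)) ∧
        (∀ g, S.mulVec (AA u) g + HGᵀ.mulVec (BB u) g
            = S.mulVec e0 g + mm ⟨0, hdT0⟩ (Sum.inr g) + mm ⟨u, hu⟩ (Sum.inr g)) := by
      intro u
      induction u with
      | zero =>
          intro hu
          have hA0 : AA 0 = e0 := by
            funext i; simp [hAA]
          have hB0 : BB 0 = 0 := by
            funext j; simp [hBB]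
          constructor
          · intro z
            rw [hA0]
            exact zmod2_cancel _ _ (h1 z)
          · intro g
            rw [hA0, hB0, Matrix.mulVec_zero, Pi.zero_apply]
            have : mm ⟨0, hdT0⟩ (Sum.inr g) + mm ⟨0, hdT0⟩ (Sum.inr g) = 0 := by
              generalize mm ⟨0, hdT0⟩ (Sum.inr g) = x
              revert x; decide
            rw [add_zero, add_assoc, this, add_zero]
      | succ u ih =>
          intro hu
          have hu' : u < dT - 1 := by omega
          have hud : u < dT := by omega
          obtain ⟨ih1, ih2⟩ := ih hud
          constructor
          · intro z
            rw [hstepA u hu', Matrix.mulVec_add, Pi.add_apply, ih1]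
            have h2 := h2L ⟨u, hu'⟩ z
            have : HZ.mulVec (fun i => f ⟨u, hu'⟩ (Sum.inl i)) z
                = mm ⟨u, hud⟩ (Sum.inl z) + mm ⟨u + 1, hu⟩ (Sum.inl z) :=
              zmod2_cancel _ _ h2
            rw [this]
            generalize mm ⟨u, hud⟩ (Sum.inl z) = x
            generalize mm ⟨u + 1, hu⟩ (Sum.inl z) = y
            revert x y; decide
          · intro g
            rw [hstepA u hu', hstepB u hu', Matrix.mulVec_add, Matrix.mulVec_add,
              Pi.add_apply, Pi.add_apply]
            have h2 := h2R ⟨u, hu'⟩ g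
            have hcan : S.mulVec (fun i => f ⟨u, hu'⟩ (Sum.inl i)) g
                + HGᵀ.mulVec (fun j => f ⟨u, hu'⟩ (Sum.inr j)) g
                = mm ⟨u, hud⟩ (Sum.inr g) + mm ⟨u + 1, hu⟩ (Sum.inr g) :=
              zmod2_cancel _ _ h2
            have expand : S.mulVec (AA u) g + S.mulVec (fun i => f ⟨u, hu'⟩ (Sum.inl i)) g
                + (HGᵀ.mulVec (BB u) g + HGᵀ.mulVec (fun j => f ⟨u, hu'⟩ (Sum.inr j)) g)
                = (S.mulVec (AA u) g + HGᵀ.mulVec (BB u) g)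
                  + (S.mulVec (fun i => f ⟨u, hu'⟩ (Sum.inl i)) g
                    + HGᵀ.mulVec (fun j => f ⟨u, hu'⟩ (Sum.inr j)) g) := by ring
            rw [expand, ih2, hcan]
            generalize S.mulVec e0 g = x0
            generalize mm ⟨0, hdT0⟩ (Sum.inr g) = x1
            generalize mm ⟨u, hud⟩ (Sum.inr g) = x2
            generalize mm ⟨u + 1, hu⟩ (Sum.inr g) = x3
            revert x0 x1 x2 x3; decide
    obtain ⟨keyA, keyB⟩ := key (ts : ℕ) ts.isLt
    have htse : (⟨(ts : ℕ), ts.isLt⟩ : Fin dT) = ts := by ext; rfl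
    rw [htse] at keyA keyB
    -- the static error
    set A : Fin n → ZMod 2 := AA (ts : ℕ) with hA
    have hA1 : HZ.mulVec A = 0 := by
      funext z
      rw [keyA z, hts]
      rfl
    have hA2 : (α * JZ).mulVec A = ψ := by
      have hNS : (α * JZ * R) * S = α * JZ := hs3a
      have hNHG : (α * JZ * R) * HGᵀ = 0 := by
        have := congrArg Matrix.transpose hs3b
        simpa [Matrix.transpose_mul] using this
      set μ : Fin nG → ZMod 2 := fun g => mm ⟨0, hdT0⟩ (Sum.inr g) with hμ
      have hSAB : S.mulVec A + HGᵀ.mulVec (BB (ts : ℕ)) = S.mulVec e0 + μ := by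
        funext g
        have := keyB g
        rw [hts] at this
        simpa using this
      have step1 : (α * JZ * R).mulVec (S.mulVec A + HGᵀ.mulVec (BB (ts : ℕ)))
          = (α * JZ).mulVec A := by
        rw [Matrix.mulVec_add, Matrix.mulVec_mulVec, Matrix.mulVec_mulVec, hNS, hNHG,
          Matrix.zero_mulVec, add_zero]
      have step2 : (α * JZ * R).mulVec (S.mulVec e0 + μ)
          = (α * JZ).mulVec e0 + (α * JZ * R).mulVec μ := by
        rw [Matrix.mulVec_add, Matrix.mulVec_mulVec, hNS]
      rw [← step1, hSAB, step2]
      funext i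
      exact hJ' i
    -- weight comparison
    have hwA : hammingNorm A ≤ hammingNorm e := by
      have hA' : A = e0 +
          ∑ t' ∈ Finset.univ.filter (fun t' : Fin (dT - 1) => (t' : ℕ) < (ts : ℕ)),
            (fun i => f t' (Sum.inl i)) := by
        funext i
        simp [hA, hAA, Finset.sum_apply]
      have w1 : hammingNorm A ≤ hammingNorm e0 +
          ∑ t' ∈ Finset.univ.filter (fun t' : Fin (dT - 1) => (t' : ℕ) < (ts : ℕ)),
            hammingNorm (fun i => f t' (Sum.inl i)) := by
        rw [hA']
        exact le_trans (hn_add_le _ _) (by gcongr; exact hn_sum_le _ _)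
      have w2 : ∀ t' : Fin (dT - 1),
          hammingNorm (fun i => f t' (Sum.inl i)) ≤ hammingNorm (f t') := by
        intro t'
        rw [hn_sum_type (f t')]
        have hc : (fun i => f t' (Sum.inl i)) = (f t') ∘ Sum.inl := rfl
        rw [hc]
        omega
      have w3 : (∑ t' ∈ Finset.univ.filter (fun t' : Fin (dT - 1) => (t' : ℕ) < (ts : ℕ)),
            hammingNorm (fun i => f t' (Sum.inl i)))
          ≤ ∑ t' : Fin (dT - 1), hammingNorm (f t') := by
        refine le_trans (Finset.sum_le_sum (fun t' _ => w2 t')) ?_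
        exact Finset.sum_le_sum_of_subset (Finset.filter_subset _ _)
      have hdecomp : hammingNorm e0 + ∑ t' : Fin (dT - 1), hammingNorm (f t')
          ≤ hammingNorm e := by
        rw [hn_sum_type e, hn_sum_type (e ∘ Sum.inr)]
        have hfp : hammingNorm ((e ∘ Sum.inr) ∘ Sum.inl)
            = ∑ t' : Fin (dT - 1), hammingNorm (f t') := by
          rw [hn_prod (((e ∘ Sum.inr) ∘ Sum.inl))]
          rfl
        have he0' : hammingNorm (e ∘ Sum.inl) = hammingNorm e0 := rfl
        omega
      omega
    -- conclude
    refine le_trans (min_le_left _ _) (le_trans (sInf_le ⟨A, hA1, hA2, rfl⟩) ?_)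
    exact_mod_cast hwA
  · -- every round has a measurement error: weight at least dT
    push_neg at hex
    have hge : dT ≤ hammingNorm e := by
      have hdecomp : hammingNorm (fun p : Fin dT × (Fin rZ ⊕ Fin nG) =>
          e (Sum.inr (Sum.inr (Sum.inr p)))) ≤ hammingNorm e := by
        rw [hn_sum_type e, hn_sum_type (e ∘ Sum.inr), hn_sum_type ((e ∘ Sum.inr) ∘ Sum.inr)]
        have : hammingNorm (((e ∘ Sum.inr) ∘ Sum.inr) ∘ Sum.inr)
            = hammingNorm (fun p : Fin dT × (Fin rZ ⊕ Fin nG) =>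
                e (Sum.inr (Sum.inr (Sum.inr p)))) := rfl
        omega
      have hsum : hammingNorm (fun p : Fin dT × (Fin rZ ⊕ Fin nG) =>
          e (Sum.inr (Sum.inr (Sum.inr p)))) = ∑ s : Fin dT, hammingNorm (mm s) := by
        rw [hn_prod]
      have hone : ∀ s : Fin dT, 1 ≤ hammingNorm (mm s) := by
        intro s
        rcases Nat.eq_zero_or_pos (hammingNorm (mm s)) with h0 | h0
        · exact absurd (hammingNorm_eq_zero.mp h0) (hex s)
        · exact h0
      calc dT = ∑ _s : Fin dT, 1 := by simp
        _ ≤ ∑ s : Fin dT, hammingNorm (mm s) := Finset.sum_le_sum (fun s _ => hone s)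
        _ ≤ hammingNorm e := by omega
    refine le_trans (min_le_right _ _) ?_
    exact_mod_cast hge
end
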